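/- With ε, p, N_L, ω_L and N_R as in the context, set ω_R = 1/ω_L, T_L = ξ − ε g_L(N_L, ξ) N_L and T_R = ξ − g_R(N_R, ξ) N_R. Then: (i) 2 g_R(N_R, ξ)² = 1 − ε ω_R²; (ii) N_L = (1/ω_R)(√(2(1 − ε ω_R²)) ξ − N_R); and (iii) T_R = (ε/ω_L²) T_L. -/

import Mathlib

/-!
The two metrics differ only in the sign of `θ ⊗ θ`, where `θ = dz + τλ(y dx − x dy)` satisfies
`θ(ξ) = 1`; hence `g_R(·, ξ) = θ = −g_L(·, ξ)`. Write `a = g_L(N_L, ξ) ≤ 0`. Since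
`g_L(N_L, N_L) + a² = λ²(N₁² + N₂²) ≥ 0`, the radicand `ε + 2a²` of `ω_L` is positive, and
`√(2(ω_L² − ε)) = −2a`, so `N_R = ω_L⁻¹(−2a ξ − N_L)` and `g_R(N_R, ξ) = −a/ω_L`. The three
relations are then identities between combinations of `ξ` and `N_L`, using only `ε² = 1`.
-/

noncomputable section

open Real

/-- Points/vectors of `ℝ³`. -/
abbrev V3 : Type := ℝ × ℝ × ℝ

/-- The domain `D`: all of `ℝ³` if `κ ≥ 0`, the solid cylinder
`{x² + y² < -4/κ}` if `κ < 0`. -/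
def Dset (κ : ℝ) : Set V3 := {p | κ < 0 → p.1 ^ 2 + p.2.1 ^ 2 < -4 / κ}

/-- The conformal factor `λ`. -/
def lam (κ : ℝ) (p : V3) : ℝ := 1 / (1 + κ / 4 * (p.1 ^ 2 + p.2.1 ^ 2))

/-- The Riemannian BCV metric `g_R` at the point `p`, evaluated on vectors `u, v`. -/
def gR (κ τ : ℝ) (p u v : V3) : ℝ :=
  (lam κ p) ^ 2 * (u.1 * v.1 + u.2.1 * v.2.1) +
    (u.2.2 + τ * lam κ p * (p.2.1 * u.1 - p.1 * u.2.1)) *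
      (v.2.2 + τ * lam κ p * (p.2.1 * v.1 - p.1 * v.2.1))

/-- The Lorentzian BCV metric `g_L` at the point `p`, evaluated on vectors `u, v`. -/
def gL (κ τ : ℝ) (p u v : V3) : ℝ :=
  (lam κ p) ^ 2 * (u.1 * v.1 + u.2.1 * v.2.1) -
    (u.2.2 + τ * lam κ p * (p.2.1 * u.1 - p.1 * u.2.1)) *
      (v.2.2 + τ * lam κ p * (p.2.1 * v.1 - p.1 * v.2.1))

/-- The frame field `E₁` (with `σ = κ/(2τ)`). -/
def E1 (κ τ : ℝ) (p : V3) : V3 :=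
  ((lam κ p)⁻¹ * cos (κ / (2 * τ) * p.2.2),
   (lam κ p)⁻¹ * sin (κ / (2 * τ) * p.2.2),
   τ * (p.1 * sin (κ / (2 * τ) * p.2.2) - p.2.1 * cos (κ / (2 * τ) * p.2.2)))

/-- The frame field `E₂` (with `σ = κ/(2τ)`). -/
def E2 (κ τ : ℝ) (p : V3) : V3 :=
  (-((lam κ p)⁻¹ * sin (κ / (2 * τ) * p.2.2)),
   (lam κ p)⁻¹ * cos (κ / (2 * τ) * p.2.2),
   τ * (p.1 * cos (κ / (2 * τ) * p.2.2) + p.2.1 * sin (κ / (2 * τ) * p.2.2)))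

/-- The (constant) frame field `E₃ = ∂_z`. -/
def E3 : V3 := (0, 0, 1)

/-- The Killing field `ξ = E₃`. -/
def xi : V3 := E3

/-- First coefficient of a vector in the frame `{E₁,E₂,E₃}` (extracted with `g_R`;
the frame is `g_R`-orthonormal on `D`). -/
def c1 (κ τ : ℝ) (p : V3) (u : V3) : ℝ := gR κ τ p u (E1 κ τ p)

/-- Second frame coefficient. -/
def c2 (κ τ : ℝ) (p : V3) (u : V3) : ℝ := gR κ τ p u (E2 κ τ p)

/-- Third frame coefficient. -/
def c3 (κ τ : ℝ) (p : V3) (u : V3) : ℝ := gR κ τ p u E3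

/-- The Riemannian cross product `u ∧_R v` at `p`. -/
def wedgeR (κ τ : ℝ) (p : V3) (u v : V3) : V3 :=
  (c2 κ τ p u * c3 κ τ p v - c3 κ τ p u * c2 κ τ p v) • E1 κ τ p
    - (c1 κ τ p u * c3 κ τ p v - c3 κ τ p u * c1 κ τ p v) • E2 κ τ p
    + (c1 κ τ p u * c2 κ τ p v - c2 κ τ p u * c1 κ τ p v) • E3

/-- The Lorentzian cross product `u ∧_L v` at `p`. -/
def wedgeL (κ τ : ℝ) (p : V3) (u v : V3) : V3 :=
  (c2 κ τ p u * c3 κ τ p v - c3 κ τ p u * c2 κ τ p v) • E1 κ τ p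
    - (c1 κ τ p u * c3 κ τ p v - c3 κ τ p u * c1 κ τ p v) • E2 κ τ p
    - (c1 κ τ p u * c2 κ τ p v - c2 κ τ p u * c1 κ τ p v) • E3

/-- The Lie bracket of vector fields on (an open subset of) `ℝ³`:
`[X,Y](p) = DY(p)(X(p)) − DX(p)(Y(p))`. -/
def lie (X Y : V3 → V3) (p : V3) : V3 :=
  fderiv ℝ Y p (X p) - fderiv ℝ X p (Y p)

/-- The explicit connection `∇ᴿ` of `𝔼³(κ,τ)`. -/
def nablaR (κ τ : ℝ) (X Y : V3 → V3) (p : V3) : V3 :=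
  (fderiv ℝ (fun q => c1 κ τ q (Y q)) p (X p)) • E1 κ τ p
    + (fderiv ℝ (fun q => c2 κ τ q (Y q)) p (X p)) • E2 κ τ p
    + (fderiv ℝ (fun q => c3 κ τ q (Y q)) p (X p)) • E3
    + (τ * c2 κ τ p (X p) * c3 κ τ p (Y p)) • E1 κ τ p
    - (τ * c1 κ τ p (X p) * c3 κ τ p (Y p)) • E2 κ τ p
    + (τ * (c1 κ τ p (X p) * c2 κ τ p (Y p) - c2 κ τ p (X p) * c1 κ τ p (Y p))) • E3
    + ((κ - 2 * τ ^ 2) / (2 * τ) * (c3 κ τ p (X p) * c1 κ τ p (Y p))) • E2 κ τ p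
    - ((κ - 2 * τ ^ 2) / (2 * τ) * (c3 κ τ p (X p) * c2 κ τ p (Y p))) • E1 κ τ p

/-- The explicit connection `∇ᴸ` of `𝕃³(κ,τ)`. -/
def nablaL (κ τ : ℝ) (X Y : V3 → V3) (p : V3) : V3 :=
  (fderiv ℝ (fun q => c1 κ τ q (Y q)) p (X p)) • E1 κ τ p
    + (fderiv ℝ (fun q => c2 κ τ q (Y q)) p (X p)) • E2 κ τ p
    + (fderiv ℝ (fun q => c3 κ τ q (Y q)) p (X p)) • E3
    - (τ * c2 κ τ p (X p) * c3 κ τ p (Y p)) • E1 κ τ p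
    + (τ * c1 κ τ p (X p) * c3 κ τ p (Y p)) • E2 κ τ p
    + (τ * (c1 κ τ p (X p) * c2 κ τ p (Y p) - c2 κ τ p (X p) * c1 κ τ p (Y p))) • E3
    + ((κ + 2 * τ ^ 2) / (2 * τ) * (c3 κ τ p (X p) * c1 κ τ p (Y p))) • E2 κ τ p
    - ((κ + 2 * τ ^ 2) / (2 * τ) * (c3 κ τ p (X p) * c2 κ τ p (Y p))) • E1 κ τ p

/-- `ω_L = √(ε + 2 g_L(N, ξ)²)`. -/
def omegaL (κ τ ε : ℝ) (p : V3) (N : V3) : ℝ :=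
  Real.sqrt (ε + 2 * (gL κ τ p N xi) ^ 2)

/-- `ω_R = 1/ω_L`. -/
def omegaR (κ τ ε : ℝ) (p : V3) (N : V3) : ℝ := 1 / omegaL κ τ ε p N

/-- The Riemannian unit normal `N_R = (1/ω_L)(√(2(ω_L² − ε)) ξ − N_L)`. -/
def NRof (κ τ ε : ℝ) (p : V3) (N : V3) : V3 :=
  (1 / omegaL κ τ ε p N) • (Real.sqrt (2 * ((omegaL κ τ ε p N) ^ 2 - ε)) • xi - N)

/-- `g_L(p)(n, ·)` as a linear form. -/
def gLlin (κ τ : ℝ) (p n : V3) : V3 →ₗ[ℝ] ℝ where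
  toFun v := gL κ τ p n v
  map_add' v w := by
    simp only [gL, Prod.fst_add, Prod.snd_add]
    ring
  map_smul' r v := by
    simp only [gL, Prod.smul_fst, Prod.smul_snd, smul_eq_mul, RingHom.id_apply]
    ring

/-- The tangent plane at `p` determined by the normal `n`:
`P_p = {v : g_L(n,v) = 0}`. -/
def Pp (κ τ : ℝ) (p n : V3) : Submodule ℝ V3 := LinearMap.ker (gLlin κ τ p n)

/-- The Lorentzian shape operator `A_L v = −∇ᴸ_v N_L`. -/
def AL (κ τ : ℝ) (NL : V3 → V3) (p : V3) (v : V3) : V3 :=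
  -(nablaL κ τ (fun _ => v) NL p)

/-- The Riemannian shape operator `A_R v = −∇ᴿ_v N_R`. -/
def AR (κ τ ε : ℝ) (NL : V3 → V3) (p : V3) (v : V3) : V3 :=
  -(nablaR κ τ (fun _ => v) (fun q => NRof κ τ ε q (NL q)) p)

/-- The tangential part `T_L = ξ − ε g_L(N_L, ξ) N_L`. -/
def TLof (κ τ ε : ℝ) (p : V3) (N : V3) : V3 := xi - (ε * gL κ τ p N xi) • N

/-- The tangential part `T_R = ξ − g_R(N_R, ξ) N_R`. -/
def TRof (κ τ ε : ℝ) (p : V3) (N : V3) : V3 :=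
  xi - (gR κ τ p (NRof κ τ ε p N) xi) • NRof κ τ ε p N

/-- The rotation `J_L v = N_L ∧_L v`. -/
def JL (κ τ : ℝ) (p : V3) (N : V3) (v : V3) : V3 := wedgeL κ τ p N v

/-- The rotation `J_R v = N_R ∧_R v`. -/
def JR (κ τ : ℝ) (p : V3) (N : V3) (v : V3) : V3 := wedgeR κ τ p N v

section Metrics

variable (κ τ : ℝ) (p : V3)

lemma gL_comm (u v : V3) : gL κ τ p u v = gL κ τ p v u := by
  unfold gL; ring

lemma gLlin_apply (n v : V3) : gLlin κ τ p n v = gL κ τ p n v := rfl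

lemma gL_xi_xi : gL κ τ p xi xi = -1 := by
  simp [gL, xi, E3]

lemma gR_xi_right (u : V3) : gR κ τ p u xi = -gL κ τ p u xi := by
  simp only [gR, gL, xi, E3]; ring

lemma gL_self_add_sq_gL_xi_nonneg (u : V3) : 0 ≤ gL κ τ p u u + gL κ τ p u xi ^ 2 := by
  have horizontal :
      gL κ τ p u u + gL κ τ p u xi ^ 2 = (lam κ p) ^ 2 * (u.1 ^ 2 + u.2.1 ^ 2) := by
    simp only [gL, xi, E3]; ring
  rw [horizontal]; positivity

end Metrics

lemma eps_add_two_mul_sq_gL_xi_pos {κ τ ε : ℝ} {p N : V3} (hε : ε = -1 ∨ ε = 1)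
    (hN : gL κ τ p N N = ε) : 0 < ε + 2 * gL κ τ p N xi ^ 2 := by
  have hnonneg := gL_self_add_sq_gL_xi_nonneg κ τ p N
  rcases hε with rfl | rfl <;> nlinarith

section UnitNormal

variable {κ τ ε : ℝ} {p N : V3}

lemma omegaL_pos (hpos : 0 < ε + 2 * gL κ τ p N xi ^ 2) : 0 < omegaL κ τ ε p N :=
  Real.sqrt_pos.mpr hpos

lemma omegaL_sq (hpos : 0 < ε + 2 * gL κ τ p N xi ^ 2) :
    omegaL κ τ ε p N ^ 2 = ε + 2 * gL κ τ p N xi ^ 2 :=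
  Real.sq_sqrt hpos.le

lemma NRof_eq (hpos : 0 < ε + 2 * gL κ τ p N xi ^ 2) (hle : gL κ τ p N xi ≤ 0) :
    NRof κ τ ε p N = (omegaL κ τ ε p N)⁻¹ • ((-2 * gL κ τ p N xi) • xi - N) := by
  have hsqrt : Real.sqrt (2 * (omegaL κ τ ε p N ^ 2 - ε)) = -2 * gL κ τ p N xi := by
    rw [omegaL_sq hpos, show 2 * (ε + 2 * gL κ τ p N xi ^ 2 - ε) = (-2 * gL κ τ p N xi) ^ 2 by
      ring]
    exact Real.sqrt_sq (by linarith)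
  rw [NRof, hsqrt, one_div]

lemma gR_NRof_xi (hpos : 0 < ε + 2 * gL κ τ p N xi ^ 2) (hle : gL κ τ p N xi ≤ 0) :
    gR κ τ p (NRof κ τ ε p N) xi = -gL κ τ p N xi / omegaL κ τ ε p N := by
  rw [gR_xi_right, gL_comm, NRof_eq hpos hle, ← gLlin_apply, map_smul, map_sub, map_smul,
    gLlin_apply, gLlin_apply, gL_xi_xi, gL_comm _ _ _ xi, smul_eq_mul, smul_eq_mul]
  ring

lemma two_mul_gR_NRof_xi_sq (hpos : 0 < ε + 2 * gL κ τ p N xi ^ 2)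
    (hle : gL κ τ p N xi ≤ 0) :
    2 * gR κ τ p (NRof κ τ ε p N) xi ^ 2 = 1 - ε * omegaR κ τ ε p N ^ 2 := by
  have hω := omegaL_pos hpos
  rw [gR_NRof_xi hpos hle, omegaR]
  field_simp
  linarith [omegaL_sq hpos]

lemma eq_omegaR_inv_smul_sub_NRof (hpos : 0 < ε + 2 * gL κ τ p N xi ^ 2)
    (hle : gL κ τ p N xi ≤ 0) :
    N = (1 / omegaR κ τ ε p N) •
      (Real.sqrt (2 * (1 - ε * omegaR κ τ ε p N ^ 2)) • xi - NRof κ τ ε p N) := by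
  have hω := omegaL_pos hpos
  have hsqrt : Real.sqrt (2 * (1 - ε * omegaR κ τ ε p N ^ 2)) =
      -2 * gL κ τ p N xi / omegaL κ τ ε p N := by
    rw [← two_mul_gR_NRof_xi_sq hpos hle, gR_NRof_xi hpos hle,
      show 2 * (2 * (-gL κ τ p N xi / omegaL κ τ ε p N) ^ 2) =
        (-2 * gL κ τ p N xi / omegaL κ τ ε p N) ^ 2 by ring]
    exact Real.sqrt_sq (div_nonneg (by linarith) hω.le)
  rw [hsqrt, NRof_eq hpos hle, omegaR]
  match_scalars <;> field_simp
  ring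

lemma TRof_eq_smul_TLof (hε : ε ^ 2 = 1) (hpos : 0 < ε + 2 * gL κ τ p N xi ^ 2)
    (hle : gL κ τ p N xi ≤ 0) :
    TRof κ τ ε p N = (ε / omegaL κ τ ε p N ^ 2) • TLof κ τ ε p N := by
  have hω := omegaL_pos hpos
  have hω2 := omegaL_sq hpos
  rw [TRof, TLof, gR_NRof_xi hpos hle, NRof_eq hpos hle]
  match_scalars
  · field_simp
    linear_combination hω2
  · field_simp
    linear_combination gL κ τ p N xi * hε

end UnitNormal

theorem NL_TL_relations_general (κ τ : ℝ) (ε : ℝ) (hε : ε = -1 ∨ ε = 1)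
    (p : V3) (NL : V3)
    (hNL : gL κ τ p NL NL = ε) (hle : gL κ τ p NL xi ≤ 0) :
    2 * (gR κ τ p (NRof κ τ ε p NL) xi) ^ 2 = 1 - ε * (omegaR κ τ ε p NL) ^ 2 ∧
    NL = (1 / omegaR κ τ ε p NL) •
      (Real.sqrt (2 * (1 - ε * (omegaR κ τ ε p NL) ^ 2)) • xi - NRof κ τ ε p NL) ∧
    TRof κ τ ε p NL = (ε / (omegaL κ τ ε p NL) ^ 2) • TLof κ τ ε p NL := by
  have hpos := eps_add_two_mul_sq_gL_xi_pos hε hNL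
  have hε2 : ε ^ 2 = 1 := by rcases hε with rfl | rfl <;> norm_num
  exact ⟨two_mul_gR_NRof_xi_sq hpos hle, eq_omegaR_inv_smul_sub_NRof hpos hle,
    TRof_eq_smul_TLof hε2 hpos hle⟩

/-- relations involving `ω_R = 1/ω_L`, the expression of `N_L`
in terms of `N_R`, and `T_R = (ε/ω_L²) T_L`. -/
theorem NL_TL_relations (κ τ : ℝ) (hτ : τ ≠ 0) (ε : ℝ) (hε : ε = -1 ∨ ε = 1)
    (p : V3) (hp : p ∈ Dset κ) (NL : V3)
    (hNL : gL κ τ p NL NL = ε) (hle : gL κ τ p NL xi ≤ 0) :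
    2 * (gR κ τ p (NRof κ τ ε p NL) xi) ^ 2 = 1 - ε * (omegaR κ τ ε p NL) ^ 2 ∧
    NL = (1 / omegaR κ τ ε p NL) •
      (Real.sqrt (2 * (1 - ε * (omegaR κ τ ε p NL) ^ 2)) • xi - NRof κ τ ε p NL) ∧
    TRof κ τ ε p NL = (ε / (omegaL κ τ ε p NL) ^ 2) • TLof κ τ ε p NL :=
  NL_TL_relations_general κ τ ε hε p NL hNL hle

end
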